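/- arXiv:2407.10316 — 6 statements merged into one kernel-verified Lean document; each statement's English description precedes it below -/
import Mathlib

section
/- Let n be a natural number and let A be a bijection of 𝔽₂ⁿ = (Fin n → ZMod 2). Then A preserves the rank of every subset of 𝔽₂ⁿ (i.e., for every set S of vectors, the dimension of the 𝔽₂-linear span of the image A(S) equals the dimension of the 𝔽₂-linear span of S) if and only if A is 𝔽₂-linear (equivalently, additive: A(u+v) = A(u) + A(v) for all u, v). -/
/-- The rank of a set of vectors: the dimension of its linear span. -/
noncomputable def spanRank (K : Type*) [Field K] {W : Type*} [AddCommGroup W] [Module K W]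
    (S : Set W) : ℕ :=
  Module.finrank K (Submodule.span K S)

/-- A bijection of `𝔽₂ⁿ` preserves the rank of every subset iff it is `𝔽₂`-linear
(equivalently, additive). -/
theorem stmt0 (n : ℕ) (A : (Fin n → ZMod 2) ≃ (Fin n → ZMod 2)) :
    (∀ S : Set (Fin n → ZMod 2), spanRank (ZMod 2) (A '' S) = spanRank (ZMod 2) S) ↔
      ∀ u v : Fin n → ZMod 2, A (u + v) = A u + A v := by
  have two : ∀ a : ZMod 2, a = 0 ∨ a = 1 := by decide
  have selfadd : ∀ w : Fin n → ZMod 2, w + w = 0 := by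
    intro w; funext i
    have : ∀ a : ZMod 2, a + a = 0 := by decide
    exact this (w i)
  constructor
  · intro h
    -- First: A 0 = 0
    have hA0 : A 0 = 0 := by
      have h1 := h {0}
      simp only [spanRank] at h1
      rw [Set.image_singleton, show Submodule.span (ZMod 2) ({(0 : Fin n → ZMod 2)} : Set _) = ⊥ by simp,
        finrank_bot] at h1
      exact Submodule.span_singleton_eq_bot.mp (Submodule.finrank_eq_zero.mp h1)
    intro u v
    by_cases hu : u = 0
    · simp [hu, hA0]
    by_cases hv : v = 0
    · simp [hv, hA0]
    by_cases huv : u = v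
    · subst huv
      rw [selfadd u, hA0, selfadd (A u)]
    -- main case
    have h1 := h {u, v, u + v}
    have h2 := h {u, v}
    simp only [spanRank] at h1 h2
    rw [Set.image_insert_eq, Set.image_insert_eq, Set.image_singleton] at h1
    rw [Set.image_insert_eq, Set.image_singleton] at h2
    have hspan : Submodule.span (ZMod 2) ({u, v, u + v} : Set _) =
        Submodule.span (ZMod 2) ({u, v} : Set _) := by
      apply le_antisymm
      · apply Submodule.span_le.mpr
        intro x hx
        rcases hx with rfl | rfl | rfl
        · exact Submodule.subset_span (by simp)
        · exact Submodule.subset_span (by simp)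
        · exact Submodule.add_mem _ (Submodule.subset_span (by simp))
            (Submodule.subset_span (by simp))
      · exact Submodule.span_mono (by intro x hx; rcases hx with rfl | rfl <;> simp)
    rw [hspan] at h1
    rw [← h2] at h1
    -- now finrank span {A u, A v, A (u+v)} = finrank span {A u, A v}
    have hle : Submodule.span (ZMod 2) ({A u, A v} : Set _) ≤
        Submodule.span (ZMod 2) ({A u, A v, A (u + v)} : Set _) := by
      apply Submodule.span_mono
      intro x hx; rcases hx with rfl | rfl <;> simp
    have heq := Submodule.eq_of_le_of_finrank_le hle (le_of_eq h1)
    have hmem : A (u + v) ∈ Submodule.span (ZMod 2) ({A u, A v} : Set _) := by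
      rw [heq]
      exact Submodule.subset_span (by simp)
    rw [Submodule.mem_span_pair] at hmem
    obtain ⟨a, b, hab⟩ := hmem
    have hinj := A.injective
    replace hab := hab.symm
    rcases two a with rfl | rfl <;> rcases two b with rfl | rfl <;>
      simp only [zero_smul, one_smul, zero_add, add_zero] at hab
    · exfalso
      apply huv
      have : u + v = 0 := hinj (by rw [hab, hA0])
      have := congrArg (· + v) this
      simpa [add_assoc, selfadd v] using this
    · exfalso
      apply hu
      have : u + v = v := hinj hab
      have := congrArg (· + v) this
      simpa [add_assoc, selfadd v] using this
    · exfalso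
      apply hv
      have : u + v = u := hinj hab
      have huvv : v + u = u := by rwa [add_comm] at this
      have := congrArg (· + u) huvv
      simpa [add_assoc, selfadd u] using this
    · exact hab
  · intro h u
    -- A is additive, hence linear; build a linear equivalence
    have hA0 : A 0 = 0 := by
      have := h 0 0
      rw [add_zero] at this
      have := congrArg (· + A 0) this.symm
      simpa [add_assoc, selfadd (A 0)] using this
    let L : (Fin n → ZMod 2) ≃ₗ[ZMod 2] (Fin n → ZMod 2) :=
      { A with
        map_add' := h
        map_smul' := by
          intro c x
          rcases two c with rfl | rfl
          · simp [hA0]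
          · simp }
    rw [spanRank, spanRank,
      show (⇑A '' u) = (⇑L.toLinearMap '' u) from rfl,
      ← Submodule.map_span L.toLinearMap u]
    exact LinearEquiv.finrank_map_eq L (Submodule.span (ZMod 2) u)
end

section
/- For every natural number n, there is an online matroid morphism from the class of binary matroids with at most n elements into the complete binary matroid of rank n. That is, one can choose for every m ≤ n and every binary matroid M on Fin m (with ground set all of Fin m) a rank-preserving map f_M : Fin m → (Fin n → ZMod 2) (for every S ⊆ Fin m, the dimension of the 𝔽₂-linear span of f_M(S) equals rank_M(S)), such that whenever M' is the k-prefix of M, f_{M'} agrees with f_M on the first k elements. -/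
open Set

/-- The rank of a set in a matroid: the supremum of the cardinalities of its
independent subsets. -/
noncomputable def mRank {α : Type*} (M : Matroid α) (S : Set α) : ℕ∞ :=
  ⨆ I ∈ {I : Set α | M.Indep I ∧ I ⊆ S}, I.encard

/-- A matroid is representable over a field `K` if independence coincides with
`K`-linear independence of an assignment of vectors to the elements. -/
def RepOver (K : Type*) [Field K] {α : Type*} (M : Matroid α) : Prop :=
  ∃ (ι : Type) (f : α → ι → K), ∀ I : Set α,
    M.Indep I ↔ I ⊆ M.E ∧ LinearIndependent K (fun x : I => f (x : α))

/-- The `k`-prefix of an ordered matroid on `Fin m`: its restriction to the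
first `k` elements, viewed as a matroid on `Fin k`. -/
def prefixMatroid {k m : ℕ} (h : k ≤ m) (M : Matroid (Fin m)) : Matroid (Fin k) :=
  M.comap (Fin.castLE h)

/-!
The greedy basis `B` of a matroid on a finite linear order consists of the elements that are not
spanned by their predecessors. Send `x` to the sum of the unit vectors `e_(idx b)` over those
`b ∈ B` with `x ∉ cl (B \ {b})`, where `idx b` is the position of `b` in `B`. Over `𝔽₂` these
`b` are exactly the basis elements carrying coefficient `1` in the expansion of `v x`, for any
representation `v`; hence this map and `v` are linear images of each other and give spans of the
same dimension. The map is built from closures in `M` alone, and an element of the `k`-prefix is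
already spanned by `B ∩ [0, k)`, which is the greedy basis of the prefix: so restricting to a
prefix commutes with the construction.
-/

section LinearAlgebra

open Submodule

variable {K V V' ι α : Type*} [Field K] [AddCommGroup V] [Module K V]
  [AddCommGroup V'] [Module K V']

theorem LinearIndepOn.sum_smul_mem_span_sdiff_singleton_iff {v : ι → V} {s : Finset ι}
    (hv : LinearIndepOn K v ↑s) (c : ι → K) {i : ι} (hi : i ∈ s) :
    ∑ j ∈ s, c j • v j ∈ span K (v '' (↑s \ {i})) ↔ c i = 0 := by
  classical
  have hrest : ∑ j ∈ s.erase i, c j • v j ∈ span K (v '' (↑s \ {i})) :=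
    sum_mem fun j hj => smul_mem _ _ <| subset_span <|
      mem_image_of_mem v ⟨Finset.mem_of_mem_erase hj, Finset.ne_of_mem_erase hj⟩
  rw [← Finset.add_sum_erase s _ hi, (span K _).add_mem_iff_left hrest]
  exact ⟨hv.eq_zero_of_smul_mem_span hi _, fun h => by simp [h]⟩

theorem LinearIndepOn.eq_sum_of_mem_span {W : Type*} [AddCommGroup W] [Module (ZMod 2) W]
    {v : ι → W} {s : Finset ι} (hv : LinearIndepOn (ZMod 2) v ↑s) {w : W}
    (hw : w ∈ span (ZMod 2) (v '' ↑s)) (c : ι → ZMod 2)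
    (hc : ∀ i ∈ s, c i = 0 ↔ w ∈ span (ZMod 2) (v '' (↑s \ {i}))) :
    w = ∑ i ∈ s, c i • v i := by
  obtain ⟨c', rfl⟩ := (mem_span_image_finset_iff_exists_fun' _).1 hw
  refine Finset.sum_congr rfl fun i hi => ?_
  have hzero : c' i = 0 ↔ c i = 0 := by rw [hc i hi, hv.sum_smul_mem_span_sdiff_singleton_iff c' hi]
  rw [(by decide : ∀ a b : ZMod 2, (a = 0 ↔ b = 0) → a = b) _ _ hzero]

theorem LinearIndepOn.exists_linearMap_eq {v : ι → V} {s : Set ι} (hv : LinearIndepOn K v s)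
    (u : ι → V') : ∃ L : V →ₗ[K] V', ∀ i ∈ s, L (v i) = u i := by
  obtain ⟨L, hL⟩ := LinearMap.exists_extend
    ((Finsupp.linearCombination K (fun i : s => u i)).comp hv.linearIndependent.repr)
  refine ⟨L, fun i hi => ?_⟩
  let x : span K (range fun j : s => v j) := ⟨v i, subset_span ⟨⟨i, hi⟩, rfl⟩⟩
  have hx := congr($hL x)
  rwa [LinearMap.comp_apply, LinearMap.comp_apply,
    hv.linearIndependent.repr_eq_single ⟨i, hi⟩ x rfl, Finsupp.linearCombination_single,
    one_smul] at hx

theorem exists_linearMap_comp_eq_of_eq_sum {s : Finset ι} {p : ι → V} {q : ι → V'}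
    (hq : LinearIndepOn K q ↑s) (c : α → ι → K) {u : α → V} {v : α → V'}
    (hu : ∀ x, u x = ∑ b ∈ s, c x b • p b) (hv : ∀ x, v x = ∑ b ∈ s, c x b • q b) :
    ∃ L : V' →ₗ[K] V, u = L ∘ v := by
  obtain ⟨L, hL⟩ := hq.exists_linearMap_eq p
  refine ⟨L, funext fun x => ?_⟩
  simp only [Function.comp_apply, hu, hv, map_sum, map_smul]
  exact Finset.sum_congr rfl fun b hb => by rw [hL b hb]

theorem finrank_span_image_comp_le (L : V' →ₗ[K] V) (v : α → V') {X : Set α} (hX : X.Finite) :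
    Module.finrank K (span K ((L ∘ v) '' X)) ≤ Module.finrank K (span K (v '' X)) := by
  have := FiniteDimensional.span_of_finite K (hX.image v)
  rw [Set.image_comp, ← map_span]
  exact finrank_map_le L _

theorem finrank_span_image_eq_of_eq_sum {s : Finset ι} {p : ι → V} {q : ι → V'}
    (hp : LinearIndepOn K p ↑s) (hq : LinearIndepOn K q ↑s) (c : α → ι → K) {u : α → V}
    {v : α → V'} (hu : ∀ x, u x = ∑ b ∈ s, c x b • p b) (hv : ∀ x, v x = ∑ b ∈ s, c x b • q b)
    {X : Set α} (hX : X.Finite) :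
    Module.finrank K (span K (u '' X)) = Module.finrank K (span K (v '' X)) := by
  obtain ⟨L, rfl⟩ := exists_linearMap_comp_eq_of_eq_sum hq c hu hv
  obtain ⟨L', hL'⟩ := exists_linearMap_comp_eq_of_eq_sum hp c hv hu
  refine (finrank_span_image_comp_le L v hX).antisymm ?_
  conv_lhs => rw [hL']
  exact finrank_span_image_comp_le L' _ hX

end LinearAlgebra

def unitVec (n j : ℕ) : Fin n → ZMod 2 := fun i => if (i : ℕ) = j then 1 else 0

theorem linearIndepOn_unitVec_comp {ι : Type*} {s : Set ι} {n : ℕ} {φ : ι → ℕ}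
    (hφ : InjOn φ s) (hlt : ∀ i ∈ s, φ i < n) :
    LinearIndepOn (ZMod 2) (fun i => unitVec n (φ i)) s := by
  have hinj : Function.Injective fun i : s => (⟨φ i, hlt i i.2⟩ : Fin n) :=
    fun i j hij => Subtype.ext (hφ i.2 j.2 (Fin.mk.inj_iff.1 hij))
  unfold LinearIndepOn
  convert (Pi.basisFun (ZMod 2) (Fin n)).linearIndependent.comp _ hinj using 1
  ext i j
  simp [unitVec, Pi.single_apply, Fin.ext_iff]

theorem Fin.Iic_castLE_subset_range {k m : ℕ} (h : k ≤ m) (x : Fin k) :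
    Iic (Fin.castLE h x) ⊆ range (Fin.castLE h) := by
  rw [Fin.range_castLE]
  exact fun y (hy : y ≤ Fin.castLE h x) => lt_of_le_of_lt (α := ℕ) hy x.isLt

theorem mRank_eq_eRk {α : Type*} (M : Matroid α) (S : Set α) : mRank M S = M.eRk S := by
  refine le_antisymm (iSup₂_le fun I hI => hI.1.encard_le_eRk_of_subset hI.2) ?_
  obtain ⟨I, hI⟩ := M.exists_isBasis' S
  rw [← hI.encard_eq_eRk]
  exact le_iSup₂ (f := fun I (_ : I ∈ {I | M.Indep I ∧ I ⊆ S}) => I.encard) I ⟨hI.indep, hI.subset⟩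

namespace Matroid

variable {α : Type*} {M : Matroid α}

theorem Indep.mem_closure_sdiff_singleton_iff {I J : Set α} {x b : α} (hI : M.Indep I)
    (hJI : J ⊆ I) (hx : x ∈ M.closure J) :
    x ∈ M.closure (I \ {b}) ↔ x ∈ M.closure (J \ {b}) := by
  refine ⟨fun hxI => ?_, fun hxJ => M.closure_mono (sdiff_subset_sdiff_left hJI) hxJ⟩
  by_contra hxJ
  have hbJ : b ∈ J := by
    by_contra hbJ
    rw [sdiff_singleton_eq_self hbJ] at hxJ
    exact hxJ hx
  have hb : b ∈ M.closure (insert x (J \ {b})) :=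
    M.mem_closure_insert hxJ (by rwa [insert_sdiff_singleton, insert_eq_of_mem hbJ])
  refine hI.notMem_closure_sdiff_of_mem (hJI hbJ) (M.closure_subset_closure_of_subset_closure ?_ hb)
  exact insert_subset hxI ((sdiff_subset_sdiff_left hJI).trans
    (M.subset_closure _ (sdiff_subset.trans hI.subset_ground)))

def IsRepresentation {W : Type*} [AddCommGroup W] (M : Matroid α) (K : Type*) [Field K]
    [Module K W] (v : α → W) : Prop :=
  ∀ I, M.Indep I ↔ I ⊆ M.E ∧ LinearIndepOn K v I

namespace IsRepresentation

open Submodule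

variable {K W : Type*} [Field K] [AddCommGroup W] [Module K W] {v : α → W}

theorem linearIndepOn (hv : M.IsRepresentation K v) {I : Set α} (hI : M.Indep I) :
    LinearIndepOn K v I :=
  ((hv I).1 hI).2

theorem mem_closure_iff (hv : M.IsRepresentation K v) {I : Set α} (hI : M.Indep I) {x : α} :
    x ∈ M.closure I ↔ x ∈ M.E ∧ v x ∈ span K (v '' I) := by
  rw [hI.mem_closure_iff', (hv.linearIndepOn hI).mem_span_iff, hv, insert_subset_iff,
    and_iff_left hI.subset_ground]
  exact and_congr_right fun hx => by simp [hx]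

theorem eRk_eq (hv : M.IsRepresentation K v) {X : Set α} (hX : X ⊆ M.E) (hXfin : X.Finite) :
    M.eRk X = Module.finrank K (span K (v '' X)) := by
  obtain ⟨I, hI⟩ := M.exists_isBasis X hX
  have hspan : span K (v '' X) = span K (v '' I) := by
    refine le_antisymm (span_le.2 ?_) (span_mono (image_mono hI.subset))
    rintro _ ⟨x, hx, rfl⟩
    exact ((hv.mem_closure_iff hI.indep).1 (hI.subset_closure hx)).2
  have := FiniteDimensional.span_of_finite K ((hXfin.subset hI.subset).image v)
  rw [← hI.encard_eq_eRk, hspan, ← toENat_rank_span_set (hv.linearIndepOn hI.indep),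
    ← Module.finrank_eq_rank, Cardinal.toENat_nat]

end IsRepresentation

variable {W : Type*} [AddCommGroup W] [Module (ZMod 2) W]

open Classical in
noncomputable def basisCoeff (M : Matroid α) (B : Set α) (x b : α) : ZMod 2 :=
  if x ∈ M.closure (B \ {b}) then 0 else 1

theorem basisCoeff_eq_zero_iff {B : Set α} {x b : α} :
    M.basisCoeff B x b = 0 ↔ x ∈ M.closure (B \ {b}) := by
  unfold basisCoeff
  split_ifs with h <;> simp [h]

theorem IsRepresentation.eq_sum_basisCoeff {v : α → W} (hv : M.IsRepresentation (ZMod 2) v)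
    {B : Finset α} (hB : M.Indep ↑B) {x : α} (hx : x ∈ M.closure ↑B) :
    v x = ∑ b ∈ B, M.basisCoeff ↑B x b • v b := by
  rw [hv.mem_closure_iff hB] at hx
  refine (hv.linearIndepOn hB).eq_sum_of_mem_span hx.2 _ fun b _ => ?_
  rw [basisCoeff_eq_zero_iff, hv.mem_closure_iff (hB.subset sdiff_subset), and_iff_right hx.1]

section Greedy

variable [LinearOrder α] [Fintype α]

open Classical in
noncomputable def greedyBasis (M : Matroid α) : Finset α :=
  {x | x ∈ M.E ∧ x ∉ M.closure (Iio x)}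

theorem mem_greedyBasis {x : α} : x ∈ M.greedyBasis ↔ x ∈ M.E ∧ x ∉ M.closure (Iio x) := by
  simp [greedyBasis]

theorem mem_closure_greedyBasis_inter_Iic {x : α} (hx : x ∈ M.E) :
    x ∈ M.closure (↑M.greedyBasis ∩ Iic x) := by
  induction x using WellFoundedLT.induction with | _ x ih
  by_cases hxB : x ∈ M.greedyBasis
  · exact M.mem_closure_of_mem' ⟨hxB, le_rfl⟩ hx
  have hcl : x ∈ M.closure (Iio x ∩ M.E) := by
    simpa [mem_greedyBasis, hx] using hxB
  refine M.closure_subset_closure_of_subset_closure ?_ hcl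
  rintro y ⟨hyx : y < x, hy⟩
  exact M.closure_mono (inter_subset_inter_right _ (Iic_subset_Iic.2 (le_of_lt hyx))) (ih y hyx hy)

theorem greedyBasis_indep : M.Indep ↑M.greedyBasis := by
  classical
  suffices ∀ J : Finset α, J ⊆ M.greedyBasis → M.Indep ↑J from this _ subset_rfl
  intro J
  induction J using Finset.induction_on_max with
  | empty => simp
  | insert a J hlt ih =>
    intro hJ
    have ha := mem_greedyBasis.1 (hJ (Finset.mem_insert_self a J))
    rw [Finset.coe_insert, (ih ((Finset.subset_insert a J).trans hJ)).insert_indep_iff_of_notMem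
      fun h => lt_irrefl a (hlt a h)]
    exact ⟨ha.1, fun h => ha.2 (M.closure_mono (fun y hy => hlt y hy) h)⟩

theorem ground_subset_closure_greedyBasis : M.E ⊆ M.closure ↑M.greedyBasis :=
  fun _ hx => M.closure_mono inter_subset_left (mem_closure_greedyBasis_inter_Iic hx)

noncomputable def greedyIndex (M : Matroid α) (b : α) : ℕ :=
  (↑M.greedyBasis ∩ Iio b : Set α).ncard

theorem greedyIndex_strictMonoOn : StrictMonoOn M.greedyIndex ↑M.greedyBasis := by
  intro a ha b _ hab
  refine ncard_lt_ncard ⟨inter_subset_inter_right _ (Iio_subset_Iio hab.le), fun h => ?_⟩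
    (toFinite _)
  exact lt_irrefl a (h ⟨ha, hab⟩).2

theorem greedyIndex_lt_card (b : α) : M.greedyIndex b < Fintype.card α := by
  rw [← Nat.card_eq_fintype_card, ← ncard_univ]
  exact ncard_lt_ncard ⟨subset_univ _, fun h => lt_irrefl b (h (mem_univ b)).2⟩

noncomputable def onlineEmbedding (n : ℕ) (M : Matroid α) (x : α) : Fin n → ZMod 2 :=
  ∑ b ∈ M.greedyBasis, M.basisCoeff ↑M.greedyBasis x b • unitVec n (M.greedyIndex b)

theorem spanRank_image_onlineEmbedding {n : ℕ} (hn : Fintype.card α ≤ n) (hE : M.E = univ)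
    {v : α → W} (hv : M.IsRepresentation (ZMod 2) v) (S : Set α) :
    spanRank (ZMod 2) (onlineEmbedding n M '' S) = spanRank (ZMod 2) (v '' S) :=
  finrank_span_image_eq_of_eq_sum
    (linearIndepOn_unitVec_comp greedyIndex_strictMonoOn.injOn
      fun b _ => (greedyIndex_lt_card b).trans_le hn)
    (hv.linearIndepOn greedyBasis_indep) (M.basisCoeff ↑M.greedyBasis) (fun _ => rfl)
    (fun x => hv.eq_sum_basisCoeff greedyBasis_indep
      (ground_subset_closure_greedyBasis (hE ▸ mem_univ x)))
    (toFinite S)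

end Greedy

section Prefix

variable {k m : ℕ} (h : k ≤ m) {M : Matroid (Fin m)}

theorem mem_greedyBasis_prefixMatroid {x : Fin k} :
    x ∈ (prefixMatroid h M).greedyBasis ↔ Fin.castLE h x ∈ M.greedyBasis := by
  simp [mem_greedyBasis, prefixMatroid, Fin.image_castLE_Iio]

theorem greedyBasis_prefixMatroid : (prefixMatroid h M).greedyBasis =
    M.greedyBasis.preimage (Fin.castLE h) (Fin.castLE_injective h).injOn := by
  ext
  simp [mem_greedyBasis_prefixMatroid]

theorem greedyIndex_prefixMatroid (b : Fin k) :
    (prefixMatroid h M).greedyIndex b = M.greedyIndex (Fin.castLE h b) := by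
  have hpre : (↑(prefixMatroid h M).greedyBasis ∩ Iio b : Set (Fin k)) =
      Fin.castLE h ⁻¹' (↑M.greedyBasis ∩ Iio (Fin.castLE h b)) := by
    ext y
    simp [mem_greedyBasis_prefixMatroid]
  rw [greedyIndex, greedyIndex, hpre, ncard_preimage_of_injective_subset_range
    (Fin.castLE_injective h) (inter_subset_right.trans (Iio_subset_Iic_self.trans
      (Fin.Iic_castLE_subset_range h b)))]

theorem castLE_mem_closure_greedyBasis_inter_range (hE : M.E = univ) (x : Fin k) :
    Fin.castLE h x ∈ M.closure (↑M.greedyBasis ∩ range (Fin.castLE h)) :=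
  M.closure_mono (inter_subset_inter_right _ (Fin.Iic_castLE_subset_range h x))
    (mem_closure_greedyBasis_inter_Iic (hE ▸ mem_univ _))

theorem basisCoeff_castLE_eq_zero (hE : M.E = univ) (x : Fin k) {b : Fin m}
    (hb : b ∉ range (Fin.castLE h)) : M.basisCoeff ↑M.greedyBasis (Fin.castLE h x) b = 0 := by
  rw [basisCoeff, if_pos]
  refine M.closure_mono ?_ (castLE_mem_closure_greedyBasis_inter_range h hE x)
  rintro y ⟨hyB, hy⟩
  exact ⟨hyB, fun hyb => hb (mem_singleton_iff.1 hyb ▸ hy)⟩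

theorem basisCoeff_prefixMatroid (hE : M.E = univ) (x b : Fin k) :
    (prefixMatroid h M).basisCoeff (Fin.castLE h ⁻¹' ↑M.greedyBasis) x b =
      M.basisCoeff ↑M.greedyBasis (Fin.castLE h x) (Fin.castLE h b) := by
  classical
  have himage : Fin.castLE h '' (Fin.castLE h ⁻¹' ↑M.greedyBasis \ {b}) =
      (↑M.greedyBasis ∩ range (Fin.castLE h)) \ {Fin.castLE h b} := by
    rw [image_sdiff (Fin.castLE_injective h), image_preimage_eq_inter_range, image_singleton]
  have hcl : x ∈ (prefixMatroid h M).closure (Fin.castLE h ⁻¹' ↑M.greedyBasis \ {b}) ↔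
      Fin.castLE h x ∈ M.closure (↑M.greedyBasis \ {Fin.castLE h b}) := by
    rw [prefixMatroid, comap_closure_eq, mem_preimage, himage,
      greedyBasis_indep.mem_closure_sdiff_singleton_iff inter_subset_left
        (castLE_mem_closure_greedyBasis_inter_range h hE x)]
  simp only [basisCoeff, hcl]

theorem onlineEmbedding_prefixMatroid {n : ℕ} (hE : M.E = univ) (x : Fin k) :
    onlineEmbedding n (prefixMatroid h M) x = onlineEmbedding n M (Fin.castLE h x) := by
  rw [onlineEmbedding, onlineEmbedding, greedyBasis_prefixMatroid h, Finset.coe_preimage]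
  refine (Finset.sum_congr rfl fun b _ => ?_).trans (Finset.sum_preimage (Fin.castLE h)
    M.greedyBasis _ (fun b => M.basisCoeff ↑M.greedyBasis (Fin.castLE h x) b •
      unitVec n (M.greedyIndex b)) fun b _ hb => ?_)
  · rw [basisCoeff_prefixMatroid h hE, greedyIndex_prefixMatroid]
  · rw [basisCoeff_castLE_eq_zero h hE x hb, zero_smul]

end Prefix

end Matroid

/-- There is an online matroid morphism from the class of binary matroids with at most `n`
elements into the complete binary matroid of rank `n`: a rank-preserving map
`f_M : Fin m → 𝔽₂ⁿ` for every binary matroid `M` on `Fin m` with `m ≤ n`, consistent on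
prefixes.  Here the rank of a set of vectors of `𝔽₂ⁿ` is the dimension of its span. -/
theorem stmt2 (n : ℕ) :
    ∃ f : (m : ℕ) → Matroid (Fin m) → (Fin m → (Fin n → ZMod 2)),
      (∀ m, m ≤ n → ∀ M : Matroid (Fin m), M.E = univ → RepOver (ZMod 2) M →
        ∀ S : Set (Fin m), (spanRank (ZMod 2) (f m M '' S) : ℕ∞) = mRank M S) ∧
      (∀ k m (hkm : k ≤ m), m ≤ n → ∀ M : Matroid (Fin m), M.E = univ →
        RepOver (ZMod 2) M →
        ∀ i : Fin k, f k (prefixMatroid hkm M) i = f m M (Fin.castLE hkm i)) := by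
  refine ⟨fun m M => Matroid.onlineEmbedding n M, ?_, ?_⟩
  · rintro m hmn M hE ⟨ι, v, hv : M.IsRepresentation (ZMod 2) v⟩ S
    rw [Matroid.spanRank_image_onlineEmbedding (by simpa using hmn) hE hv, mRank_eq_eRk]
    exact (hv.eRk_eq (hE ▸ subset_univ S) (toFinite S)).symm
  · rintro k m hkm - M hE - i
    exact Matroid.onlineEmbedding_prefixMatroid hkm hE i
end

section
/- Let n be a natural number, let 𝔽₂ⁿ = (Fin n → ZMod 2), and let (𝔽₂ⁿ)_[n] be the copies matroid of the complete binary matroid of rank n with n copies, i.e., the matroid on 𝔽₂ⁿ × Fin n in which the rank of a set S equals the dimension of the 𝔽₂-linear span of the projection of S to 𝔽₂ⁿ. If f is a bijection of 𝔽₂ⁿ × Fin n that preserves this rank function (for every set S, the rank of f(S) equals the rank of S), then there exist an 𝔽₂-linear automorphism A of 𝔽₂ⁿ and, for each u ∈ 𝔽₂ⁿ, a permutation σ_u of Fin n, such that f(u, j) = (A(u), σ_u(j)) for all u ∈ 𝔽₂ⁿ and j ∈ Fin n. -/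
open Set

/-- The rank function of the copies matroid `(𝔽₂ⁿ)_[n]`: the rank of a set of element-copy
pairs is the dimension of the `𝔽₂`-span of its projection to `𝔽₂ⁿ`. -/
noncomputable def copyRank (n : ℕ) (S : Set ((Fin n → ZMod 2) × Fin n)) : ℕ :=
  spanRank (ZMod 2) (Prod.fst '' S)

/-!
A rank-preserving map `g` of `𝔽₂`-vector spaces preserves span membership, because
`x ∈ span S` exactly when adding `x` to the finite set `S` does not raise its rank. Over `𝔽₂`,
`span {v} = {0, v}` and `span {u, v} = {0, u, v, u + v}`, so `g` is injective and
`g (u + v) ∈ {0, g u, g v, g u + g v}`; injectivity leaves only `g u + g v`, so `g` is additive,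
hence linear. For the copies matroid, `(u, j)` and `(u, j')` span each other, so the first
coordinates of their images span each other too and are therefore equal. Thus
`f (u, j) = (A u, σ_u j)`, and `A` is a rank-preserving bijection, hence a linear automorphism.
-/

open Submodule hiding spanRank

section SpanRank

variable {K V W ι : Type*} [Field K] [AddCommGroup V] [Module K V] [AddCommGroup W] [Module K W]

theorem spanRank_insert_eq_iff_mem_span {S : Set V} (hS : S.Finite) (x : V) :
    spanRank K (insert x S) = spanRank K S ↔ x ∈ span K S := by
  refine ⟨fun h => ?_, fun hx => by unfold spanRank; rw [span_insert_eq_span hx]⟩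
  have := FiniteDimensional.span_of_finite K (hS.insert x)
  rw [eq_of_le_of_finrank_eq (span_mono (subset_insert x S)) h.symm]
  exact subset_span (mem_insert x S)

theorem mem_span_image_iff_of_spanRank_image_eq {φ : ι → V} {ψ : ι → W}
    (h : ∀ S : Set ι, S.Finite → spanRank K (φ '' S) = spanRank K (ψ '' S))
    {S : Set ι} (hS : S.Finite) (i : ι) :
    φ i ∈ span K (φ '' S) ↔ ψ i ∈ span K (ψ '' S) := by
  rw [← spanRank_insert_eq_iff_mem_span (hS.image φ),
    ← spanRank_insert_eq_iff_mem_span (hS.image ψ), ← image_insert_eq, ← image_insert_eq,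
    h _ (hS.insert i), h _ hS]

end SpanRank

section ZModTwo

theorem zmod_two_eq_zero_or_one (c : ZMod 2) : c = 0 ∨ c = 1 := by
  revert c; decide

variable {V : Type*} [AddCommGroup V] [Module (ZMod 2) V]

theorem mem_span_singleton_zmod_two_iff {x v : V} :
    x ∈ span (ZMod 2) {v} ↔ x = 0 ∨ x = v := by
  rw [mem_span_singleton]
  constructor
  · rintro ⟨a, rfl⟩
    rcases zmod_two_eq_zero_or_one a with rfl | rfl <;> simp
  · rintro (rfl | rfl)
    exacts [⟨0, zero_smul _ _⟩, ⟨1, one_smul _ _⟩]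

theorem mem_span_pair_zmod_two_iff {x a b : V} :
    x ∈ span (ZMod 2) {a, b} ↔ x = 0 ∨ x = a ∨ x = b ∨ x = a + b := by
  rw [mem_span_pair]
  constructor
  · rintro ⟨c, d, rfl⟩
    rcases zmod_two_eq_zero_or_one c with rfl | rfl <;>
      rcases zmod_two_eq_zero_or_one d with rfl | rfl <;> simp
  · rintro (rfl | rfl | rfl | rfl)
    exacts [⟨0, 0, by simp⟩, ⟨1, 0, by simp⟩, ⟨0, 1, by simp⟩, ⟨1, 1, by simp⟩]

end ZModTwo

def PreservesSpanRank (K : Type*) [Field K] {V W : Type*} [AddCommGroup V] [Module K V]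
    [AddCommGroup W] [Module K W] (g : V → W) : Prop :=
  ∀ S : Set V, S.Finite → spanRank K (g '' S) = spanRank K S

namespace PreservesSpanRank

variable {K V W : Type*} [Field K] [AddCommGroup V] [Module K V] [AddCommGroup W] [Module K W]
  {g : V → W}

theorem mem_span_image_iff (hg : PreservesSpanRank K g) {S : Set V} (hS : S.Finite) (x : V) :
    g x ∈ span K (g '' S) ↔ x ∈ span K S := by
  simpa using
    mem_span_image_iff_of_spanRank_image_eq (ψ := id) (fun S hS => by simpa using hg S hS) hS x

theorem map_eq_zero_iff (hg : PreservesSpanRank K g) {x : V} : g x = 0 ↔ x = 0 := by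
  simpa using hg.mem_span_image_iff finite_empty x

section ZModTwo

variable [Module (ZMod 2) V] [Module (ZMod 2) W] {g : V → W}

theorem injective (hg : PreservesSpanRank (ZMod 2) g) : Function.Injective g := by
  intro u v huv
  have hu : u ∈ span (ZMod 2) {v} := by
    rw [← hg.mem_span_image_iff (finite_singleton v), image_singleton, huv]
    exact mem_span_singleton_self _
  rcases mem_span_singleton_zmod_two_iff.mp hu with rfl | rfl
  · rw [hg.map_eq_zero_iff.mpr rfl, eq_comm, hg.map_eq_zero_iff] at huv
    exact huv.symm
  · rfl

theorem map_add (hg : PreservesSpanRank (ZMod 2) g) (u v : V) : g (u + v) = g u + g v := by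
  have hmem : g (u + v) ∈ span (ZMod 2) {g u, g v} := by
    rw [← image_pair, hg.mem_span_image_iff (toFinite _)]
    exact add_mem (subset_span (mem_insert u _)) (subset_span (mem_insert_of_mem u rfl))
  rcases mem_span_pair_zmod_two_iff.mp hmem with h | h | h | h
  · obtain rfl : v = u := by
      rw [← ZModModule.neg_eq_self u]
      exact (neg_eq_of_add_eq_zero_right (hg.map_eq_zero_iff.mp h)).symm
    rw [h, ZModModule.add_self]
  · rw [h, hg.map_eq_zero_iff.mpr (add_eq_left.mp (hg.injective h)), add_zero]
  · rw [h, hg.map_eq_zero_iff.mpr (add_eq_right.mp (hg.injective h)), zero_add]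
  · exact h

end ZModTwo

end PreservesSpanRank

section Copies

variable {V ι : Type*} [AddCommGroup V] [Module (ZMod 2) V] {f : V × ι ≃ V × ι}
  (hf : ∀ S : Set (V × ι), S.Finite →
    spanRank (ZMod 2) (Prod.fst '' (f '' S)) = spanRank (ZMod 2) (Prod.fst '' S))
include hf

theorem fst_apply_eq_of_spanRank_fst_image (u : V) (j j' : ι) : (f (u, j)).1 = (f (u, j')).1 := by
  have hf' : ∀ S : Set (V × ι), S.Finite →
      spanRank (ZMod 2) ((Prod.fst ∘ f) '' S) = spanRank (ZMod 2) (Prod.fst '' S) := by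
    simpa only [image_comp] using hf
  have hmem : ∀ j j', (f (u, j)).1 ∈ span (ZMod 2) {(f (u, j')).1} := fun j j' => by
    simpa using (mem_span_image_iff_of_spanRank_image_eq hf' (finite_singleton (u, j')) (u, j)).mpr
      (by simp)
  rcases mem_span_singleton_zmod_two_iff.mp (hmem j j') with h | h
  · rcases mem_span_singleton_zmod_two_iff.mp (hmem j' j) with h' | h'
    exacts [h.trans h'.symm, h'.symm]
  · exact h

theorem exists_linearEquiv_perm_of_spanRank_fst_image :
    ∃ (A : V ≃ₗ[ZMod 2] V) (σ : V → Equiv.Perm ι), ∀ u j, f (u, j) = (A u, σ u j) := by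
  obtain hι | ⟨⟨j₀⟩⟩ := isEmpty_or_nonempty ι
  · exact ⟨LinearEquiv.refl _ _, fun _ => Equiv.refl _, fun _ j => isEmptyElim j⟩
  set g : V → V := fun u => (f (u, j₀)).1
  have hfst : ∀ u j, (f (u, j)).1 = g u := fun u j =>
    fst_apply_eq_of_spanRank_fst_image hf u j j₀
  have hg : PreservesSpanRank (ZMod 2) g := fun T hT => by
    simpa [image_image] using hf ((·, j₀) '' T) (hT.image _)
  have hsurj : Function.Surjective g := fun w =>
    ⟨(f.symm (w, j₀)).1, by rw [← hfst _ (f.symm (w, j₀)).2, Prod.mk.eta, f.apply_symm_apply]⟩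
  let A : V ≃ₗ[ZMod 2] V := .ofBijective
    (AddMonoidHom.toZModLinearMap 2 (AddMonoidHom.mk' g hg.map_add)) ⟨hg.injective, hsurj⟩
  have hσ : ∀ u, Function.Bijective fun j => (f (u, j)).2 := by
    intro u
    refine ⟨fun j j' h => ?_, fun j' => ?_⟩
    · simpa using f.injective (Prod.ext ((hfst u j).trans (hfst u j').symm) h)
    · set p := f.symm (g u, j')
      have hp : p.1 = u := hg.injective (by rw [← hfst p.1 p.2, Prod.mk.eta, f.apply_symm_apply])
      refine ⟨p.2, ?_⟩
      show (f (u, p.2)).2 = j'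
      rw [← hp, Prod.mk.eta, f.apply_symm_apply]
  exact ⟨A, fun u => Equiv.ofBijective _ (hσ u), fun u j => Prod.ext (hfst u j) rfl⟩

end Copies

/-- Every rank-preserving bijection of the copies matroid `(𝔽₂ⁿ)_[n]` decomposes as an
`𝔽₂`-linear automorphism `A` of `𝔽₂ⁿ` together with, for each `u ∈ 𝔽₂ⁿ`, a permutation of
the copy indices: `f (u, j) = (A u, σ_u j)`. -/
theorem stmt5 (n : ℕ)
    (f : ((Fin n → ZMod 2) × Fin n) ≃ ((Fin n → ZMod 2) × Fin n))
    (hf : ∀ S : Set ((Fin n → ZMod 2) × Fin n), copyRank n (f '' S) = copyRank n S) :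
    ∃ (A : (Fin n → ZMod 2) ≃ₗ[ZMod 2] (Fin n → ZMod 2))
      (σ : (Fin n → ZMod 2) → Equiv.Perm (Fin n)),
      ∀ (u : Fin n → ZMod 2) (j : Fin n), f (u, j) = (A u, σ u j) :=
  exists_linearEquiv_perm_of_spanRank_fst_image fun S _ => hf S
end

section
/- Let n ≥ 1 and let N_n be the matroid on Fin (n+1) in which 0 is a loop and every other set is independent iff it has at most 2 non-zero elements; that is, the rank of a set S equals min(2, |S \ {0}|). There is an online matroid morphism from the class of matroids with at most n elements and rank at most 2 into N_n. -/
/-!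
Label a loop by `0` and a nonloop `e` by `1 +` the index of the first nonloop parallel to `e`.
That element arrives no later than `e`, so the label is already determined by the prefix ending
at `e`. Two nonloops get the same label exactly when they are parallel, and in a matroid of rank
at most `2` the rank of `S` is `min 2` of the number of parallel classes of nonloops met by `S`,
which is the rank in `N` of the set of labels of `S`.
-/

open Set

/-- An online matroid morphism (OMM) of the class `P` of ordered matroids into the host
matroid `N`: a rank-preserving map for each matroid of the class, consistent on prefixes. -/
def OMMof (P : (m : ℕ) → Matroid (Fin m) → Prop) {β : Type*} (N : Matroid β) : Prop :=
  ∃ f : (m : ℕ) → Matroid (Fin m) → (Fin m → β),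
    (∀ m (M : Matroid (Fin m)), P m M →
      ∀ S : Set (Fin m), S ⊆ M.E → mRank N (f m M '' S) = mRank M S) ∧
    (∀ k m (hkm : k ≤ m) (M : Matroid (Fin m)), P m M →
      ∀ i : Fin k, f k (prefixMatroid hkm M) i = f m M (Fin.castLE hkm i))

/-- An online matroid embedding (OME): an online matroid morphism all of whose maps are
injective. -/
def OMEof (P : (m : ℕ) → Matroid (Fin m) → Prop) {β : Type*} (N : Matroid β) : Prop :=
  ∃ f : (m : ℕ) → Matroid (Fin m) → (Fin m → β),
    (∀ m (M : Matroid (Fin m)), P m M → Function.Injective (f m M)) ∧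
    (∀ m (M : Matroid (Fin m)), P m M →
      ∀ S : Set (Fin m), S ⊆ M.E → mRank N (f m M '' S) = mRank M S) ∧
    (∀ k m (hkm : k ≤ m) (M : Matroid (Fin m)), P m M →
      ∀ i : Fin k, f k (prefixMatroid hkm M) i = f m M (Fin.castLE hkm i))

namespace Matroid

variable {α β : Type*} {M : Matroid α}

lemma mRank_eq_eRk (M : Matroid α) (S : Set α) : mRank M S = M.eRk S := by
  refine le_antisymm (iSup₂_le fun I hI => hI.1.encard_le_eRk_of_subset hI.2) ?_
  obtain ⟨I, hIS, hI, hIS_card⟩ := M.le_eRk_iff.1 le_rfl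
  exact hIS_card ▸ le_iSup₂_of_le I ⟨hI, hIS⟩ le_rfl

lemma comap_closure_singleton_eq_iff {M : Matroid β} {f : α → β} (hf : f.Injective) {e e' : α}
    (he : (M.comap f).IsNonloop e) (he' : (M.comap f).IsNonloop e') :
    (M.comap f).closure {e} = (M.comap f).closure {e'} ↔ M.closure {f e} = M.closure {f e'} := by
  rw [he.closure_eq_closure_iff_eq_or_dep he',
    (comap_isNonloop_iff.1 he).closure_eq_closure_iff_eq_or_dep (comap_isNonloop_iff.1 he'),
    comap_indep_iff, image_pair, hf.eq_iff, and_iff_left hf.injOn]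

/-- `g` labels the parallel classes of `M` by values other than `z`, and sends loops to `z`. -/
structure IsParallelLabelling (M : Matroid α) (g : α → β) (z : β) : Prop where
  apply_eq_of_not_isNonloop ⦃e : α⦄ : ¬ M.IsNonloop e → g e = z
  apply_ne_of_isNonloop ⦃e : α⦄ : M.IsNonloop e → g e ≠ z
  apply_eq_apply_iff ⦃e f : α⦄ : M.IsNonloop e → M.IsNonloop f →
    (g e = g f ↔ M.closure {e} = M.closure {f})

namespace IsParallelLabelling

variable {g : α → β} {z : β}

lemma isNonloop_of_apply_ne (hg : M.IsParallelLabelling g z) {e : α} (he : g e ≠ z) :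
    M.IsNonloop e :=
  by_contra fun h => he (hg.apply_eq_of_not_isNonloop h)

lemma indep_pair_of_apply_ne (hg : M.IsParallelLabelling g z) {e f : α} (he : M.IsNonloop e)
    (hf : M.IsNonloop f) (hef : g e ≠ g f) : M.Indep {e, f} := by
  by_contra hdep
  exact hef ((hg.apply_eq_apply_iff he hf).2
    ((he.closure_eq_closure_iff_eq_or_dep hf).2 (Or.inr hdep)))

lemma injOn_of_indep (hg : M.IsParallelLabelling g z) {I : Set α} (hI : M.Indep I) :
    InjOn g I := by
  intro e he f hf hef
  by_contra hne
  have hcl := (hg.apply_eq_apply_iff (hI.isNonloop_of_mem he) (hI.isNonloop_of_mem hf)).1 hef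
  rw [(hI.isNonloop_of_mem he).closure_eq_closure_iff_eq_or_dep (hI.isNonloop_of_mem hf)] at hcl
  exact hcl.elim hne (· (hI.subset (pair_subset he hf)))

lemma eRk_le_encard (hg : M.IsParallelLabelling g z) (S : Set α) :
    M.eRk S ≤ (g '' S \ {z}).encard := by
  refine M.eRk_le_iff.2 fun I hIS hI => ?_
  rw [← (hg.injOn_of_indep hI).encard_image]
  refine encard_mono ?_
  rintro _ ⟨e, he, rfl⟩
  exact ⟨mem_image_of_mem g (hIS he), hg.apply_ne_of_isNonloop (hI.isNonloop_of_mem he)⟩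

lemma min_two_encard_le_eRk (hg : M.IsParallelLabelling g z) (S : Set α) :
    min 2 (g '' S \ {z}).encard ≤ M.eRk S := by
  rcases lt_or_ge 1 (g '' S \ {z}).encard with h | h
  · obtain ⟨_, _, ⟨⟨e, heS, rfl⟩, he⟩, ⟨⟨f, hfS, rfl⟩, hf⟩, hef⟩ :=
      one_lt_encard_iff.1 h
    have hI := hg.indep_pair_of_apply_ne (hg.isNonloop_of_apply_ne he)
      (hg.isNonloop_of_apply_ne hf) hef
    calc min 2 _ ≤ 2 := min_le_left _ _
      _ = ({e, f} : Set α).encard := (encard_pair (ne_of_apply_ne g hef)).symm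
      _ ≤ M.eRk S := hI.encard_le_eRk_of_subset (pair_subset heS hfS)
  obtain h0 | ⟨x, hx⟩ := encard_le_one_iff_eq.1 h
  · simp [h0]
  obtain ⟨⟨e, heS, rfl⟩, he⟩ : x ∈ g '' S \ {z} := hx ▸ rfl
  calc min 2 _ ≤ _ := min_le_right _ _
    _ ≤ 1 := h
    _ = ({e} : Set α).encard := encard_singleton e |>.symm
    _ ≤ M.eRk S := (hg.isNonloop_of_apply_ne he).indep.encard_le_eRk_of_subset
        (singleton_subset_iff.2 heS)

lemma eRk_eq (hg : M.IsParallelLabelling g z) (hM : M.eRank ≤ 2) (S : Set α) :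
    M.eRk S = min 2 (g '' S \ {z}).encard :=
  le_antisymm (le_min ((M.eRk_le_eRank S).trans hM) (hg.eRk_le_encard S))
    (hg.min_two_encard_le_eRk S)

end IsParallelLabelling

end Matroid

section OnlineLabel

open Matroid

variable {m : ℕ} {M : Matroid (Fin m)} {i : Fin m}

def parallelClass (M : Matroid (Fin m)) (i : Fin m) : Set (Fin m) :=
  {j | M.IsNonloop j ∧ M.closure {j} = M.closure {i}}

lemma self_mem_parallelClass (hi : M.IsNonloop i) : i ∈ parallelClass M i :=
  ⟨hi, rfl⟩

lemma castLE_mem_parallelClass_iff {k : ℕ} (hkm : k ≤ m) {i j : Fin k}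
    (hi : (prefixMatroid hkm M).IsNonloop i) :
    Fin.castLE hkm j ∈ parallelClass M (Fin.castLE hkm i) ↔
      j ∈ parallelClass (prefixMatroid hkm M) i := by
  have hinj := Fin.castLE_injective hkm
  refine ⟨fun ⟨hj, h⟩ => ?_, fun ⟨hj, h⟩ => ?_⟩
  · have hj' : (prefixMatroid hkm M).IsNonloop j := comap_isNonloop_iff.2 hj
    exact ⟨hj', (comap_closure_singleton_eq_iff hinj hj' hi).2 h⟩
  · exact ⟨comap_isNonloop_iff.1 hj, (comap_closure_singleton_eq_iff hinj hj hi).1 h⟩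

noncomputable def firstParallel (M : Matroid (Fin m)) (i : Fin m) : ℕ :=
  sInf (Fin.val '' parallelClass M i)

lemma exists_val_eq_firstParallel (hi : M.IsNonloop i) :
    ∃ j ∈ parallelClass M i, (j : ℕ) = firstParallel M i :=
  Nat.sInf_mem ⟨i, mem_image_of_mem _ (self_mem_parallelClass hi)⟩

lemma firstParallel_le (hi : M.IsNonloop i) : firstParallel M i ≤ i :=
  Nat.sInf_le (mem_image_of_mem _ (self_mem_parallelClass hi))

lemma firstParallel_eq_iff {j : Fin m} (hi : M.IsNonloop i) (hj : M.IsNonloop j) :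
    firstParallel M i = firstParallel M j ↔ M.closure {i} = M.closure {j} := by
  refine ⟨fun h => ?_, fun h => by simp only [firstParallel, parallelClass, h]⟩
  obtain ⟨i₀, ⟨-, hi₀i⟩, hi₀⟩ := exists_val_eq_firstParallel hi
  obtain ⟨j₀, ⟨-, hj₀j⟩, hj₀⟩ := exists_val_eq_firstParallel hj
  rw [← hi₀i, ← hj₀j, Fin.ext (hi₀.trans (h.trans hj₀.symm))]

lemma firstParallel_prefixMatroid {k : ℕ} (hkm : k ≤ m) {i : Fin k}
    (hi : (prefixMatroid hkm M).IsNonloop i) :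
    firstParallel (prefixMatroid hkm M) i = firstParallel M (Fin.castLE hkm i) := by
  have hi' : M.IsNonloop (Fin.castLE hkm i) := comap_isNonloop_iff.1 hi
  have hle : firstParallel M (Fin.castLE hkm i) ∈
      Fin.val '' parallelClass (prefixMatroid hkm M) i := by
    obtain ⟨j, hj, hjval⟩ := exists_val_eq_firstParallel hi'
    have hjk : (j : ℕ) < k := hjval ▸ (firstParallel_le hi').trans_lt i.2
    exact ⟨⟨j, hjk⟩, (castLE_mem_parallelClass_iff hkm hi).1 hj, hjval⟩
  have hge : firstParallel (prefixMatroid hkm M) i ∈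
      Fin.val '' parallelClass M (Fin.castLE hkm i) := by
    obtain ⟨j, hj, hjval⟩ := exists_val_eq_firstParallel hi
    exact ⟨Fin.castLE hkm j, (castLE_mem_parallelClass_iff hkm hi).2 hj, hjval⟩
  exact le_antisymm (Nat.sInf_le hle) (Nat.sInf_le hge)

open Classical in
/-- Nonloops parallel to the element `j` get the label `j + 1`; loops get `0`. -/
noncomputable def onlineLabel (n : ℕ) (M : Matroid (Fin m)) (i : Fin m) : Fin (n + 1) :=
  if M.IsNonloop i then Fin.ofNat (n + 1) (firstParallel M i + 1) else 0

lemma val_onlineLabel {n : ℕ} (hmn : m ≤ n) (hi : M.IsNonloop i) :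
    (onlineLabel n M i : ℕ) = firstParallel M i + 1 := by
  rw [onlineLabel, if_pos hi, Fin.val_ofNat,
    Nat.mod_eq_of_lt (by have := firstParallel_le hi; omega)]

lemma isParallelLabelling_onlineLabel {n : ℕ} (hmn : m ≤ n) :
    M.IsParallelLabelling (onlineLabel n M) 0 where
  apply_eq_of_not_isNonloop _ hi := if_neg hi
  apply_ne_of_isNonloop _ hi := by simp [Fin.ext_iff, val_onlineLabel hmn hi]
  apply_eq_apply_iff _ _ hi hj := by
    rw [Fin.ext_iff, val_onlineLabel hmn hi, val_onlineLabel hmn hj, Nat.add_right_cancel_iff,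
      firstParallel_eq_iff hi hj]

lemma onlineLabel_prefixMatroid (n : ℕ) {k : ℕ} (hkm : k ≤ m) (i : Fin k) :
    onlineLabel n (prefixMatroid hkm M) i = onlineLabel n M (Fin.castLE hkm i) := by
  by_cases hi : (prefixMatroid hkm M).IsNonloop i
  · have hi' : M.IsNonloop (Fin.castLE hkm i) := comap_isNonloop_iff.1 hi
    rw [onlineLabel, onlineLabel, if_pos hi, if_pos hi', firstParallel_prefixMatroid hkm hi]
  · have hi' : ¬ M.IsNonloop (Fin.castLE hkm i) := mt comap_isNonloop_iff.2 hi
    rw [onlineLabel, onlineLabel, if_neg hi, if_neg hi']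

end OnlineLabel

theorem stmt11_general (n : ℕ) (N : Matroid (Fin (n + 1)))
    (hr : ∀ S : Set (Fin (n + 1)), mRank N S = min 2 (S \ {0}).encard) :
    OMMof (fun m M => m ≤ n ∧ M.E = univ ∧ mRank M univ ≤ 2) N := by
  refine ⟨fun m M => onlineLabel n M, ?_,
    fun k m hkm M _ i => onlineLabel_prefixMatroid n hkm i⟩
  rintro m M ⟨hmn, -, hrk⟩ S -
  rw [Matroid.mRank_eq_eRk, Matroid.eRk_univ_eq] at hrk
  rw [hr, Matroid.mRank_eq_eRk, (isParallelLabelling_onlineLabel hmn).eRk_eq hrk]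

/-- Let `N` be the matroid on `Fin (n+1)` in which `0` is a loop and the rank of a set `S`
is `min 2 |S \ {0}|`.  For `n ≥ 1` there is an online matroid morphism from the class of
matroids with at most `n` elements and rank at most `2` into `N`. -/
theorem stmt11 (n : ℕ) (hn : 1 ≤ n) (N : Matroid (Fin (n + 1))) (hE : N.E = univ)
    (hr : ∀ S : Set (Fin (n + 1)), mRank N S = min 2 (S \ {0}).encard) :
    OMMof (fun m M => m ≤ n ∧ M.E = univ ∧ mRank M univ ≤ 2) N :=
  stmt11_general n N hr
end

section
/- For every n ≥ 7 and every matroid N (on any type β), there is no online matroid morphism from the class of matroids of rank at most 3 with at most n elements into N. -/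
open Set

namespace Matroid

variable {α : Type*} {M : Matroid α} {X Y Z : Set α} {c d : α}

theorem eRk_union_add_eRk_le_of_subset_inter (M : Matroid α) (hZ : Z ⊆ X ∩ Y) :
    M.eRk (X ∪ Y) + M.eRk Z ≤ M.eRk X + M.eRk Y :=
  calc M.eRk (X ∪ Y) + M.eRk Z ≤ M.eRk (X ∩ Y) + M.eRk (X ∪ Y) := by
        rw [add_comm]; gcongr; exact M.eRk_mono hZ
    _ ≤ M.eRk X + M.eRk Y := M.eRk_inter_add_eRk_union_le X Y

theorem eRk_insert_insert_le {k : ℕ} (hX : k ≤ M.eRk X) (hc : M.eRk (insert c X) ≤ k)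
    (hd : M.eRk (insert d X) ≤ k) : M.eRk (insert c (insert d X)) ≤ k := by
  have hsub := M.eRk_union_add_eRk_le_of_subset_inter
    (subset_inter (subset_insert c X) (subset_insert d X))
  rw [insert_union, union_insert, union_self] at hsub
  refine (ENat.add_le_add_iff_right (ENat.natCast_ne_top k)).1 ?_
  calc M.eRk (insert c (insert d X)) + k ≤ M.eRk (insert c (insert d X)) + M.eRk X := by gcongr
    _ ≤ k + k := hsub.trans (add_le_add hc hd)

theorem eRk_pair_le_one {k l : ℕ} (hX : M.eRk (insert c (insert d X)) ≤ k)
    (hY : M.eRk (insert c (insert d Y)) ≤ l) (hXY : k + l ≤ M.eRk (X ∪ Y) + 1) :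
    M.eRk {c, d} ≤ 1 := by
  set U := insert c (insert d X) ∪ insert c (insert d Y)
  have hsub : M.eRk U + M.eRk {c, d} ≤ k + l :=
    (M.eRk_union_add_eRk_le_of_subset_inter (by simp [insert_subset_iff])).trans
      (add_le_add hX hY)
  have hU : M.eRk U ≠ ⊤ := ne_top_of_le_ne_top (by simp) (le_self_add.trans hsub)
  refine (ENat.add_le_add_iff_left hU).1 ?_
  calc M.eRk U + M.eRk {c, d} ≤ M.eRk (X ∪ Y) + 1 := hsub.trans hXY
    _ ≤ M.eRk U + 1 := by
        gcongr
        exact M.eRk_mono (union_subset_union ((subset_insert _ _).trans (subset_insert _ _))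
          ((subset_insert _ _).trans (subset_insert _ _)))

theorem eRk_insert_le_of_eRk_pair_le_one (hcd : M.eRk {c, d} ≤ 1) (hd : 1 ≤ M.eRk {d}) :
    M.eRk (insert c X) ≤ M.eRk (insert d X) := by
  have hsub := M.eRk_union_add_eRk_le_of_subset_inter (X := insert d X) (Y := {c, d}) (Z := {d})
    (by simp)
  have hfin : M.eRk {d} ≠ ⊤ :=
    ne_top_of_le_ne_top ENat.one_ne_top ((M.eRk_mono (by simp)).trans hcd)
  refine (ENat.add_le_add_iff_right hfin).1 ?_
  calc M.eRk (insert c X) + M.eRk {d} ≤ M.eRk (insert d X ∪ {c, d}) + M.eRk {d} := by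
        gcongr
        exact M.eRk_mono
          (insert_subset (by simp) (subset_union_of_subset_left (subset_insert _ _) _))
    _ ≤ M.eRk (insert d X) + 1 := hsub.trans (by gcongr)
    _ ≤ M.eRk (insert d X) + M.eRk {d} := by gcongr

section SparsePaving

variable {r : ℕ} {𝓗 : Set (Finset α)}

/-- Independence in the sparse paving matroid of rank `r + 1` whose circuit-hyperplanes are
the members of `𝓗`. -/
def SparsePavingIndep (r : ℕ) (𝓗 : Set (Finset α)) (I : Finset α) : Prop :=
  I.card ≤ r + 1 ∧ I ∉ 𝓗

theorem SparsePavingIndep.subset (h𝓗 : ∀ H ∈ 𝓗, H.card = r + 1) {I J : Finset α}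
    (hJ : SparsePavingIndep r 𝓗 J) (hIJ : I ⊆ J) : SparsePavingIndep r 𝓗 I := by
  refine ⟨(Finset.card_le_card hIJ).trans hJ.1, fun hI => hJ.2 ?_⟩
  rwa [← Finset.eq_of_subset_of_card_le hIJ (hJ.1.trans (h𝓗 I hI).ge)]

theorem SparsePavingIndep.exists_insert_of_card_lt [DecidableEq α]
    (h𝓗 : ∀ H ∈ 𝓗, H.card = r + 1)
    (h𝓗inter : ∀ H ∈ 𝓗, ∀ H' ∈ 𝓗, H ≠ H' → (H ∩ H').card < r) {I J : Finset α}
    (hJ : SparsePavingIndep r 𝓗 J) (hIJ : I.card < J.card) :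
    ∃ e ∈ J, e ∉ I ∧ SparsePavingIndep r 𝓗 (insert e I) := by
  obtain ⟨e, heJ, heI⟩ := Finset.exists_mem_notMem_of_card_lt_card hIJ
  have := Finset.card_insert_le e I
  by_cases hIr : I.card < r
  · exact ⟨e, heJ, heI, by omega, fun h => by have := h𝓗 _ h; omega⟩
  by_contra! hbad
  have hmem (x) (hxJ : x ∈ J) (hxI : x ∉ I) : insert x I ∈ 𝓗 := by
    by_contra h
    exact hbad x hxJ hxI ⟨(Finset.card_insert_le x I).trans (by have := hJ.1; omega), h⟩
  -- `J` is not `insert e I`, so it contains a second point `e'` outside `I`; the two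
  -- circuit-hyperplanes `insert e I` and `insert e' I` then meet in `I`, which is too large.
  have hJe : J ≠ insert e I := fun h => hJ.2 (h ▸ hmem e heJ heI)
  obtain ⟨e', he'J, he'⟩ : ∃ e' ∈ J, e' ∉ insert e I := by
    by_contra! h
    exact hJe (Finset.eq_of_subset_of_card_le h (by rw [Finset.card_insert_of_notMem heI]; omega))
  rw [Finset.mem_insert, not_or] at he'
  have hne : insert e I ≠ insert e' I := fun h =>
    he'.1 ((Finset.mem_insert.1 (h ▸ Finset.mem_insert_self e' I)).resolve_right he'.2)
  have := h𝓗inter _ (hmem e heJ heI) _ (hmem e' he'J he'.2) hne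
  have := Finset.card_le_card (Finset.subset_inter (Finset.subset_insert e I)
    (Finset.subset_insert e' I))
  omega

def sparsePaving [DecidableEq α] (r : ℕ) (𝓗 : Set (Finset α)) (h𝓗 : ∀ H ∈ 𝓗, H.card = r + 1)
    (h𝓗inter : ∀ H ∈ 𝓗, ∀ H' ∈ 𝓗, H ≠ H' → (H ∩ H').card < r) : Matroid α :=
  (IndepMatroid.ofFinset univ (SparsePavingIndep r 𝓗)
    ⟨by simp, fun h => by simpa using h𝓗 ∅ h⟩
    (fun _ _ hJ hIJ => hJ.subset h𝓗 hIJ)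
    (fun _ _ _ hJ hIJ => hJ.exists_insert_of_card_lt h𝓗 h𝓗inter hIJ)
    (fun _ _ => subset_univ _)).matroid

variable [DecidableEq α] {h𝓗 : ∀ H ∈ 𝓗, H.card = r + 1}
  {h𝓗inter : ∀ H ∈ 𝓗, ∀ H' ∈ 𝓗, H ≠ H' → (H ∩ H').card < r}

theorem sparsePaving_indep_iff {I : Set α} : (sparsePaving r 𝓗 h𝓗 h𝓗inter).Indep I ↔
    ∀ J : Finset α, ↑J ⊆ I → SparsePavingIndep r 𝓗 J := by
  rw [sparsePaving, IndepMatroid.matroid_indep_iff]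
  exact IndepMatroid.ofFinset_indep' ..

theorem sparsePaving_indep_coe_iff {F : Finset α} :
    (sparsePaving r 𝓗 h𝓗 h𝓗inter).Indep ↑F ↔ SparsePavingIndep r 𝓗 F := by
  rw [sparsePaving, IndepMatroid.matroid_indep_iff]
  exact IndepMatroid.ofFinset_indep ..

theorem sparsePaving_eRk_coe_of_notMem {F : Finset α} (hF : F.card ≤ r + 1) (hF𝓗 : F ∉ 𝓗) :
    (sparsePaving r 𝓗 h𝓗 h𝓗inter).eRk ↑F = F.card := by
  rw [(sparsePaving_indep_coe_iff.2 ⟨hF, hF𝓗⟩).eRk_eq_encard, encard_coe_eq_coe_finsetCard]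

theorem sparsePaving_eRk_coe_le_of_mem {H : Finset α} (hH : H ∈ 𝓗) :
    (sparsePaving r 𝓗 h𝓗 h𝓗inter).eRk ↑H ≤ r := by
  refine eRk_le_iff.2 fun I hIH hI => ?_
  lift I to Finset α using (Finset.finite_toSet H).subset hIH
  have hne : I ≠ H := fun h => (sparsePaving_indep_coe_iff.1 hI).2 (h ▸ hH)
  have := Finset.card_lt_card (Finset.ssubset_iff_subset_ne.2 ⟨Finset.coe_subset.1 hIH, hne⟩)
  rw [encard_coe_eq_coe_finsetCard, Nat.cast_le]
  have := h𝓗 H hH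
  omega

theorem sparsePaving_eRank_le : (sparsePaving r 𝓗 h𝓗 h𝓗inter).eRank ≤ r + 1 := by
  obtain ⟨B, hB⟩ := (sparsePaving r 𝓗 h𝓗 h𝓗inter).exists_isBase
  rw [← hB.encard_eq_eRank]
  by_contra! hlt
  obtain ⟨F, hFB, hF⟩ := exists_subset_encard_eq (Order.add_one_le_of_lt hlt)
  lift F to Finset α using finite_of_encard_eq_coe (k := r + 2) hF
  have := (sparsePaving_indep_coe_iff.1 (hB.indep.subset hFB)).1
  rw [encard_coe_eq_coe_finsetCard] at hF
  norm_cast at hF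
  omega

theorem sparsePaving_indep_iff_of_subset {𝓗' : Set (Finset α)}
    {h𝓗' : ∀ H ∈ 𝓗', H.card = r + 1}
    {h𝓗inter' : ∀ H ∈ 𝓗', ∀ H' ∈ 𝓗', H ≠ H' → (H ∩ H').card < r} {S I : Set α}
    (hS : ∀ H : Finset α, ↑H ⊆ S → (H ∈ 𝓗 ↔ H ∈ 𝓗')) (hIS : I ⊆ S) :
    (sparsePaving r 𝓗 h𝓗 h𝓗inter).Indep I ↔ (sparsePaving r 𝓗' h𝓗' h𝓗inter').Indep I := by
  simp only [sparsePaving_indep_iff, SparsePavingIndep]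
  refine forall_congr' fun J => imp_congr_right fun hJI => ?_
  rw [hS J (hJI.trans hIS)]

end SparsePaving

end Matroid

theorem mRank_univ_sparsePaving_le {α : Type*} [DecidableEq α] {r : ℕ} {𝓗 : Set (Finset α)}
    {h𝓗 : ∀ H ∈ 𝓗, H.card = r + 1}
    {h𝓗inter : ∀ H ∈ 𝓗, ∀ H' ∈ 𝓗, H ≠ H' → (H ∩ H').card < r} :
    mRank (Matroid.sparsePaving r 𝓗 h𝓗 h𝓗inter) univ ≤ r + 1 := by
  rw [mRank_eq_eRk, Matroid.eRk_univ_eq]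
  exact Matroid.sparsePaving_eRank_le

theorem prefixMatroid_eq_of_indep_iff {k m : ℕ} (h : k ≤ m) {M M' : Matroid (Fin m)}
    (hE : M.E = M'.E) (hMM' : ∀ I ⊆ range (Fin.castLE h), M.Indep I ↔ M'.Indep I) :
    prefixMatroid h M = prefixMatroid h M' :=
  Matroid.ext_indep (by simp only [prefixMatroid, Matroid.comap_ground_eq, hE]) fun I _ => by
    simp only [prefixMatroid, Matroid.comap_indep_iff, hMM' _ (image_subset_range _ I)]

def twoLines : Set (Finset (Fin 7)) := {{0, 3, 6}, {1, 2, 6}}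

def threeLines : Set (Finset (Fin 7)) := insert {4, 5, 6} twoLines

theorem mem_twoLines {H : Finset (Fin 7)} : H ∈ twoLines ↔ H = {0, 3, 6} ∨ H = {1, 2, 6} :=
  Iff.rfl

theorem mem_threeLines {H : Finset (Fin 7)} :
    H ∈ threeLines ↔ H = {4, 5, 6} ∨ H = {0, 3, 6} ∨ H = {1, 2, 6} :=
  Iff.rfl

theorem card_eq_three_of_mem_threeLines : ∀ H ∈ threeLines, H.card = 2 + 1 := by
  simp only [mem_threeLines]
  rintro H (rfl | rfl | rfl) <;> rfl

theorem card_inter_lt_two_of_mem_threeLines :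
    ∀ H ∈ threeLines, ∀ H' ∈ threeLines, H ≠ H' → (H ∩ H').card < 2 := by
  simp only [mem_threeLines]
  rintro H (rfl | rfl | rfl) H' (rfl | rfl | rfl) <;> decide

noncomputable def twoLinesMatroid : Matroid (Fin 7) :=
  Matroid.sparsePaving 2 twoLines (fun H hH => card_eq_three_of_mem_threeLines H (Or.inr hH))
    (fun H hH H' hH' => card_inter_lt_two_of_mem_threeLines H (Or.inr hH) H' (Or.inr hH'))

noncomputable def threeLinesMatroid : Matroid (Fin 7) :=
  Matroid.sparsePaving 2 threeLines card_eq_three_of_mem_threeLines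
    card_inter_lt_two_of_mem_threeLines

theorem prefixMatroid_twoLinesMatroid_eq (h : 6 ≤ 7) :
    prefixMatroid h twoLinesMatroid = prefixMatroid h threeLinesMatroid := by
  have h6 : (6 : Fin 7) ∉ range (Fin.castLE h) := by
    rintro ⟨i, hi⟩
    have := congrArg Fin.val hi
    simp only [Fin.val_castLE] at this
    omega
  refine prefixMatroid_eq_of_indep_iff h rfl fun I hI =>
    Matroid.sparsePaving_indep_iff_of_subset (fun H hH => ?_) hI
  refine (or_iff_right fun hH456 => h6 (hH ?_)).symm
  simp [hH456]

open Matroid in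
theorem false_of_eRk_image_eq_of_common_prefix {β : Type*} (N : Matroid β) (a b : Fin 7 → β)
    (hab : ∀ i : Fin 6, a i.castSucc = b i.castSucc)
    (ha : ∀ S, N.eRk (a '' S) = twoLinesMatroid.eRk S)
    (hb : ∀ S, N.eRk (b '' S) = threeLinesMatroid.eRk S) : False := by
  have indepA (F : Finset (Fin 7)) (hF : F.card ≤ 2 + 1) (hF𝓗 : F ∉ twoLines) :
      N.eRk (a '' F) = F.card := (ha F).trans (sparsePaving_eRk_coe_of_notMem hF hF𝓗)
  have lineA (H : Finset (Fin 7)) (hH : H ∈ twoLines) : N.eRk (a '' H) ≤ 2 :=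
    (ha H).trans_le (sparsePaving_eRk_coe_le_of_mem hH)
  have lineB (H : Finset (Fin 7)) (hH : H ∈ threeLines) : N.eRk (b '' H) ≤ 2 :=
    (hb H).trans_le (sparsePaving_eRk_coe_le_of_mem hH)
  obtain ⟨e0, e1, e2, e3, e4, e5⟩ :
      a 0 = b 0 ∧ a 1 = b 1 ∧ a 2 = b 2 ∧ a 3 = b 3 ∧ a 4 = b 4 ∧ a 5 = b 5 :=
    ⟨hab 0, hab 1, hab 2, hab 3, hab 4, hab 5⟩
  have h03 : 2 ≤ N.eRk {a 0, a 3} := by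
    simpa [image_insert_eq] using (indepA {0, 3} (by decide) (by rw [mem_twoLines]; decide)).ge
  have h03c : N.eRk {a 6, a 0, a 3} ≤ 2 := by
    simpa [image_insert_eq] using lineA {6, 0, 3} (by rw [mem_twoLines]; decide)
  have h03d : N.eRk {b 6, a 0, a 3} ≤ 2 := by
    simpa [image_insert_eq, e0, e3] using lineB {6, 0, 3} (by rw [mem_threeLines]; decide)
  have h12 : 2 ≤ N.eRk {a 1, a 2} := by
    simpa [image_insert_eq] using (indepA {1, 2} (by decide) (by rw [mem_twoLines]; decide)).ge
  have h12c : N.eRk {a 6, a 1, a 2} ≤ 2 := by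
    simpa [image_insert_eq] using lineA {6, 1, 2} (by rw [mem_twoLines]; decide)
  have h12d : N.eRk {b 6, a 1, a 2} ≤ 2 := by
    simpa [image_insert_eq, e1, e2] using lineB {6, 1, 2} (by rw [mem_threeLines]; decide)
  have h012 : 3 ≤ N.eRk {a 0, a 1, a 2} := by
    simpa [image_insert_eq] using (indepA {0, 1, 2} (by decide) (by rw [mem_twoLines]; decide)).ge
  have h645c : 3 ≤ N.eRk {a 6, a 4, a 5} := by
    simpa [image_insert_eq] using (indepA {6, 4, 5} (by decide) (by rw [mem_twoLines]; decide)).ge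
  have h645d : N.eRk {b 6, a 4, a 5} ≤ 2 := by
    simpa [image_insert_eq, e4, e5] using lineB {6, 4, 5} (by rw [mem_threeLines]; decide)
  have h6d : 1 ≤ N.eRk {b 6} := by
    simpa using ((hb ↑({6} : Finset (Fin 7))).trans (sparsePaving_eRk_coe_of_notMem
      (F := {6}) (by decide) (by rw [mem_threeLines]; decide))).ge
  have hcd : N.eRk {a 6, b 6} ≤ 1 := by
    have hspan : 3 ≤ N.eRk ({a 0, a 3} ∪ {a 1, a 2}) :=
      h012.trans (N.eRk_mono (by
        intro x
        simp only [mem_union, mem_insert_iff, mem_singleton_iff]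
        tauto))
    refine eRk_pair_le_one (eRk_insert_insert_le h03 h03c h03d)
      (eRk_insert_insert_le h12 h12c h12d) ?_
    calc ((2 : ℕ) : ℕ∞) + (2 : ℕ) = 3 + 1 := by norm_num
      _ ≤ _ := by gcongr
  have := (eRk_insert_le_of_eRk_pair_le_one hcd h6d).trans h645d
  exact absurd (h645c.trans this) (by norm_num)

/-- For every `n ≥ 7` and every host matroid `N`, there is no online matroid morphism from
the class of matroids of rank at most `3` with at most `n` elements into `N`. -/
theorem stmt12 (n : ℕ) (hn : 7 ≤ n) (β : Type*) (N : Matroid β) :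
    ¬ OMMof (fun m M => m ≤ n ∧ M.E = univ ∧ mRank M univ ≤ 3) N := by
  rintro ⟨f, hrank, hcons⟩
  have hA : 7 ≤ n ∧ twoLinesMatroid.E = univ ∧ mRank twoLinesMatroid univ ≤ 3 :=
    ⟨hn, rfl, mRank_univ_sparsePaving_le.trans (by norm_num)⟩
  have hB : 7 ≤ n ∧ threeLinesMatroid.E = univ ∧ mRank threeLinesMatroid univ ≤ 3 :=
    ⟨hn, rfl, mRank_univ_sparsePaving_le.trans (by norm_num)⟩
  have h67 : 6 ≤ 7 := by norm_num
  refine false_of_eRk_image_eq_of_common_prefix N (f 7 twoLinesMatroid) (f 7 threeLinesMatroid)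
    (fun i => ?_) (fun S => ?_) (fun S => ?_)
  · calc f 7 twoLinesMatroid i.castSucc = f 6 (prefixMatroid h67 twoLinesMatroid) i :=
          (hcons 6 7 h67 _ hA i).symm
      _ = f 6 (prefixMatroid h67 threeLinesMatroid) i := by
          rw [prefixMatroid_twoLinesMatroid_eq]
      _ = f 7 threeLinesMatroid i.castSucc := hcons 6 7 h67 _ hB i
  · rw [← mRank_eq_eRk, ← mRank_eq_eRk]
    exact hrank 7 _ hA S (subset_univ S)
  · rw [← mRank_eq_eRk, ← mRank_eq_eRk]
    exact hrank 7 _ hB S (subset_univ S)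
end

section
/- Let M be a loopless matroid (every singleton in the ground set is independent) of finite rank on a linearly ordered type α, and let B be a base of M. Define f on the ground set of M by: f(x) = x if x ∈ B, and otherwise f(x) is the least element of B belonging to the unique circuit of M contained in {x} ∪ B (the fundamental circuit of x with respect to B). Then for every set S of elements of M, the number of distinct values of f on S is at most the rank of S in M. -/
open Set Matroid

/-- A circuit of a matroid: a minimal dependent subset of the ground set. -/
def IsCircuitOf {α : Type*} (M : Matroid α) (C : Set α) : Prop :=
  C ⊆ M.E ∧ ¬ M.Indep C ∧ ∀ D : Set α, D ⊂ C → M.Indep D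

/-! Write `f` for the map of the theorem. Every `x` is spanned by the elements of `B` that are
`≥ f x`, and `f x` is spanned by `x` together with the elements of `B` that are `> f x`.
Given a circuit `C` on which `f` is injective, let `x ∈ C` have the least `f`-value. The rest
of `C` is spanned by `B ∩ Ioi (f x)`, hence so is `x`, hence so is `f x ∈ B`, contradicting the
independence of `B`. So every set on which `f` is injective is independent, and a section of
`f` over `f '' S` is an independent subset of `S` with as many elements as `f '' S`. -/

section

variable {α : Type*}

lemma IsCircuitOf.isCircuit {M : Matroid α} {C : Set α} (hC : IsCircuitOf M C) :
    M.IsCircuit C :=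
  isCircuit_iff_forall_ssubset.2 ⟨⟨hC.2.1, hC.1⟩, hC.2.2⟩

lemma Matroid.Indep.encard_le_mRank {M : Matroid α} {I S : Set α} (hI : M.Indep I)
    (hIS : I ⊆ S) : I.encard ≤ mRank M S :=
  le_biSup _ (show I ∈ {I | M.Indep I ∧ I ⊆ S} from ⟨hI, hIS⟩)

section LinearOrder

variable [LinearOrder α] {M : Matroid α} {B T : Set α} {f : α → α} {x : α}

lemma Matroid.Indep.indep_of_injOn (hB : M.Indep B) (hT : T.Finite) (hinj : InjOn f T)
    (hfB : ∀ x ∈ T, f x ∈ B)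
    (hclosure : ∀ x ∈ T, x ∈ M.closure (B ∩ Ici (f x)))
    (hclosure_apply : ∀ x ∈ T, f x ∈ M.closure (insert x (B ∩ Ioi (f x)))) :
    M.Indep T := by
  have hTE : T ⊆ M.E := fun x hx ↦ M.closure_subset_ground _ (hclosure x hx)
  by_contra hdep
  obtain ⟨C, hCT, hC⟩ := ((not_indep_iff hTE).1 hdep).exists_isCircuit_subset
  obtain ⟨x, hxC, hmin⟩ := exists_min_image C f (hT.subset hCT) hC.nonempty
  have hrest : C \ {x} ⊆ M.closure (B ∩ Ioi (f x)) := by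
    rintro y ⟨hyC, hyx⟩
    have hlt : f x < f y := (hmin y hyC).lt_of_ne fun h ↦ hyx (hinj (hCT hyC) (hCT hxC) h.symm)
    exact M.closure_subset_closure (inter_subset_inter_right B fun _ h ↦ hlt.trans_le h)
      (hclosure y (hCT hyC))
  have hx : x ∈ M.closure (B ∩ Ioi (f x)) :=
    M.closure_subset_closure_of_subset_closure hrest (hC.mem_closure_sdiff_singleton_of_mem hxC)
  have hfx : f x ∈ M.closure (B ∩ Ioi (f x)) := by
    rw [← closure_insert_eq_of_mem_closure hx]
    exact hclosure_apply x (hCT hxC)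
  exact hB.notMem_closure_sdiff_of_mem (hfB x (hCT hxC))
    (M.closure_subset_closure (inter_subset_inter_right B fun _ h ↦ ne_of_gt h) hfx)

structure IsLeastFundCircuitMap (M : Matroid α) (B : Set α) (f : α → α) : Prop where
  apply_of_mem : ∀ x ∈ B, f x = x
  exists_isCircuitOf : ∀ x ∈ M.E \ B, ∃ C : Set α, IsCircuitOf M C ∧ C ⊆ insert x B ∧ x ∈ C ∧
    IsLeast (B ∩ C) (f x)

namespace IsLeastFundCircuitMap

lemma apply_mem (hf : IsLeastFundCircuitMap M B f) (hx : x ∈ M.E) : f x ∈ B := by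
  by_cases hxB : x ∈ B
  · rwa [hf.apply_of_mem x hxB]
  · obtain ⟨C, -, -, -, hleast⟩ := hf.exists_isCircuitOf x ⟨hx, hxB⟩
    exact hleast.1.1

lemma mem_closure_inter_Ici (hf : IsLeastFundCircuitMap M B f) (hx : x ∈ M.E) :
    x ∈ M.closure (B ∩ Ici (f x)) := by
  by_cases hxB : x ∈ B
  · exact M.mem_closure_of_mem' ⟨hxB, (hf.apply_of_mem x hxB).le⟩ hx
  · obtain ⟨C, hC, hCB, hxC, hleast⟩ := hf.exists_isCircuitOf x ⟨hx, hxB⟩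
    refine M.closure_subset_closure ?_ (hC.isCircuit.mem_closure_sdiff_singleton_of_mem hxC)
    rintro y ⟨hyC, hyx⟩
    have hyB : y ∈ B := (hCB hyC).resolve_left hyx
    exact ⟨hyB, hleast.2 ⟨hyB, hyC⟩⟩

lemma apply_mem_closure_insert_inter_Ioi (hf : IsLeastFundCircuitMap M B f)
    (hx : x ∈ M.E) :
    f x ∈ M.closure (insert x (B ∩ Ioi (f x))) := by
  by_cases hxB : x ∈ B
  · rw [hf.apply_of_mem x hxB]
    exact M.mem_closure_of_mem' (mem_insert x _) hx
  · obtain ⟨C, hC, hCB, -, hleast⟩ := hf.exists_isCircuitOf x ⟨hx, hxB⟩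
    refine M.closure_subset_closure ?_
      (hC.isCircuit.mem_closure_sdiff_singleton_of_mem hleast.1.2)
    rintro y ⟨hyC, hyfx⟩
    refine (hCB hyC).imp id fun hyB ↦ ⟨hyB, ?_⟩
    exact (hleast.2 ⟨hyB, hyC⟩).lt_of_ne' hyfx

lemma indep_of_injOn (hf : IsLeastFundCircuitMap M B f) (hB : M.Indep B) (hT : T.Finite)
    (hTE : T ⊆ M.E) (hinj : InjOn f T) : M.Indep T :=
  hB.indep_of_injOn hT hinj (fun _ hx ↦ hf.apply_mem (hTE hx))
    (fun _ hx ↦ hf.mem_closure_inter_Ici (hTE hx))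
    (fun _ hx ↦ hf.apply_mem_closure_insert_inter_Ioi (hTE hx))

end IsLeastFundCircuitMap

end LinearOrder

end

theorem stmt17_general {α : Type*} [LinearOrder α] (M : Matroid α)
    (hfin : M.RankFinite)
    (B : Set α) (hB : M.IsBase B) (f : α → α)
    (hfB : ∀ x ∈ B, f x = x)
    (hfC : ∀ x ∈ M.E \ B, ∃ C : Set α, IsCircuitOf M C ∧ C ⊆ insert x B ∧ x ∈ C ∧
      IsLeast (B ∩ C) (f x)) :
    ∀ S : Set α, S ⊆ M.E → (f '' S).encard ≤ mRank M S := by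
  intro S hSE
  have hf : IsLeastFundCircuitMap M B f := ⟨hfB, hfC⟩
  obtain ⟨T, hTS, hinj, himage⟩ := (surjOn_image f S).exists_subset_injOn_image_eq
  have hTE : T ⊆ M.E := hTS.trans hSE
  have hfT : f '' T ⊆ B := image_subset_iff.2 fun x hx ↦ hf.apply_mem (hTE hx)
  have hT : M.Indep T :=
    hf.indep_of_injOn hB.indep ((hB.finite.subset hfT).of_finite_image hinj) hTE hinj
  calc (f '' S).encard = T.encard := by rw [← himage, hinj.encard_image]
    _ ≤ mRank M S := hT.encard_le_mRank hTS

/-- Let `M` be a loopless matroid of finite rank on a linearly ordered type, `B` a base of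
`M`, and `f` the map fixing `B` pointwise and sending each `x ∉ B` to the least element of
`B` lying in the fundamental circuit of `x` with respect to `B`.  Then the number of
distinct values of `f` on any set `S` of elements is at most the rank of `S`. -/
theorem stmt17 {α : Type*} [LinearOrder α] (M : Matroid α)
    (hloopless : ∀ x ∈ M.E, M.Indep {x}) (hfin : M.RankFinite)
    (B : Set α) (hB : M.IsBase B) (f : α → α)
    (hfB : ∀ x ∈ B, f x = x)
    (hfC : ∀ x ∈ M.E \ B, ∃ C : Set α, IsCircuitOf M C ∧ C ⊆ insert x B ∧ x ∈ C ∧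
      IsLeast (B ∩ C) (f x)) :
    ∀ S : Set α, S ⊆ M.E → (f '' S).encard ≤ mRank M S :=
  stmt17_general M hfin B hB f hfB hfC
end
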